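/- The map T₂ : (ℂ \ {0})³ → (ℂ \ {0})³ defined by T₂(x,y,z) = (x·y·z⁻¹, z, y) satisfies the tetrahedron equation T¹²³ ∘ T¹⁴⁵ ∘ T²⁴⁶ ∘ T³⁵⁶ = T³⁵⁶ ∘ T²⁴⁶ ∘ T¹⁴⁵ ∘ T¹²³, i.e. it is a tetrahedron map. -/

import Mathlib

section Tetra

variable {X : Type*}

/-- `T` acting on factors 1,2,3 of `X⁶`. -/
def lift123 (T : X × X × X → X × X × X) :
    X × X × X × X × X × X → X × X × X × X × X × X
  | (a, b, c, d, e, f) =>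
    match T (a, b, c) with
    | (a', b', c') => (a', b', c', d, e, f)

/-- `T` acting on factors 1,4,5 of `X⁶`. -/
def lift145 (T : X × X × X → X × X × X) :
    X × X × X × X × X × X → X × X × X × X × X × X
  | (a, b, c, d, e, f) =>
    match T (a, d, e) with
    | (a', d', e') => (a', b, c, d', e', f)

/-- `T` acting on factors 2,4,6 of `X⁶`. -/
def lift246 (T : X × X × X → X × X × X) :
    X × X × X × X × X × X → X × X × X × X × X × X
  | (a, b, c, d, e, f) =>
    match T (b, d, f) with
    | (b', d', f') => (a, b', c, d', e, f')

/-- `T` acting on factors 3,5,6 of `X⁶`. -/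
def lift356 (T : X × X × X → X × X × X) :
    X × X × X × X × X × X → X × X × X × X × X × X
  | (a, b, c, d, e, f) =>
    match T (c, e, f) with
    | (c', e', f') => (a, b, c', d, e', f')

/-- The Zamolodchikov tetrahedron equation for a map `T : X³ → X³`. -/
def IsTetrahedronMap (T : X × X × X → X × X × X) : Prop :=
  lift123 T ∘ lift145 T ∘ lift246 T ∘ lift356 T =
    lift356 T ∘ lift246 T ∘ lift145 T ∘ lift123 T

end Tetra

/-- The map `T₂(x,y,z) = (x·y·z⁻¹, z, y)` on `(ℂ \ {0})³`. -/
def T2 : ℂˣ × ℂˣ × ℂˣ → ℂˣ × ℂˣ × ℂˣ :=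
  fun (x, y, z) => (x * y * z⁻¹, z, y)

def mulMulInvSwap (G : Type*) [CommGroup G] : G × G × G → G × G × G :=
  fun (x, y, z) => (x * y * z⁻¹, z, y)

theorem isTetrahedronMap_mulMulInvSwap (G : Type*) [CommGroup G] :
    IsTetrahedronMap (mulMulInvSwap G) := by
  funext ⟨a, b, c, d, e, f⟩
  -- Both sides send `(a, b, c, d, e, f)` to `(a b d c⁻¹ e⁻¹, c e f⁻¹, b d e⁻¹, f, e, d)`.
  simp only [Function.comp_apply, lift123, lift145, lift246, lift356, mulMulInvSwap,
    Prod.mk.injEq, and_true]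
  apply Additive.ofMul.injective
  simp only [ofMul_mul, ofMul_inv]
  abel

theorem T2_isTetrahedronMap : IsTetrahedronMap T2 :=
  isTetrahedronMap_mulMulInvSwap ℂˣ
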